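/- Under the block structure of the previous statement, the set of feasible f ∈ ℝ² (i.e., those making Ψ positive definite, given fixed A ≻ 0, B, C, D with M = D − BᵀA⁻¹B ≻ 0 and v = e − CᵀA⁻¹C > 0) is nonempty, open, convex, and bounded; in particular f₀ = BᵀA⁻¹C is always feasible. -/

import Mathlib

open Matrix

attribute [local instance] Matrix.normedAddCommGroup

/-!
Taking Schur complements twice — of `A` in `P = [[A, B], [Bᵀ, D]]`, then of `P` in `Ψ` — reduces
feasibility of `f` to the scalar inequality `(C; f)ᵀ P⁻¹ (C; f) < e`, which is continuous in `f`.
At `f₀ = BᵀA⁻¹C` one has `(C; f₀) = P (A⁻¹C; 0)`, so the left side equals `CᵀA⁻¹C`, which is `< e`.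
Convexity holds because `f ↦ Ψ` is affine and positive definite matrices form a convex cone, and
boundedness because the `2 × 2` principal minors of `Ψ` give `f_i² ≤ D_ii e`.
-/

namespace Matrix

variable {X R 𝕜 m n ι : Type*}

@[fun_prop]
theorem _root_.Continuous.matrix_fromRows [TopologicalSpace X] [TopologicalSpace R]
    {A₁ : X → Matrix m ι R} {A₂ : X → Matrix n ι R} (h₁ : Continuous A₁)
    (h₂ : Continuous A₂) : Continuous fun x => fromRows (A₁ x) (A₂ x) :=
  continuous_matrix <| by rintro (i | i) j <;> exact Continuous.matrix_elem ‹_› i j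

section RCLike

open scoped ComplexOrder

variable [RCLike 𝕜]

theorem convex_setOf_posDef : Convex ℝ {M : Matrix n n 𝕜 | M.PosDef} := by
  intro M hM N hN a b ha hb hab
  rcases ha.eq_or_lt with rfl | ha
  · simpa [show b = 1 by linarith] using hN
  · exact (hM.smul ha).add_posSemidef (hN.posSemidef.smul hb)

variable [Fintype m] [Fintype n] [DecidableEq m] [DecidableEq n]

theorem posDef_iff_posSemidef_and_det_ne_zero {M : Matrix n n 𝕜} :
    M.PosDef ↔ M.PosSemidef ∧ M.det ≠ 0 :=
  ⟨fun h => ⟨h.posSemidef, h.det_pos.ne'⟩, fun h => h.1.posDef_iff_det_ne_zero.mpr h.2⟩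

theorem posDef_fromBlocks₁₁_iff {A : Matrix m m 𝕜} (B : Matrix m n 𝕜) (D : Matrix n n 𝕜)
    (hA : A.PosDef) : (fromBlocks A B Bᴴ D).PosDef ↔ (D - Bᴴ * A⁻¹ * B).PosDef := by
  let := hA.isUnit.invertible
  rw [posDef_iff_posSemidef_and_det_ne_zero, posDef_iff_posSemidef_and_det_ne_zero,
    hA.fromBlocks₁₁, det_fromBlocks₁₁, invOf_eq_nonsing_inv, mul_ne_zero_iff,
    and_iff_right hA.det_pos.ne']

theorem posDef_iff_of_unique [Unique ι] {M : Matrix ι ι 𝕜} :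
    M.PosDef ↔ 0 < M default default := by
  have hM : M = diagonal fun i => M i i := by
    ext i j
    rw [Subsingleton.elim i j, diagonal_apply_eq]
  conv_lhs => rw [hM]
  rw [posDef_diagonal_iff, Unique.forall_iff]

end RCLike

theorem PosSemidef.sq_apply_le [Fintype n] {M : Matrix n n ℝ} (hM : M.PosSemidef) (i j : n) :
    M i j ^ 2 ≤ M i i * M j j := by
  have h := (hM.submatrix ![i, j]).det_nonneg
  have hji : M j i = M i j := hM.isHermitian.apply i j
  rw [det_fin_two] at h
  simp only [submatrix_apply, cons_val_zero, cons_val_one] at h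
  rw [hji, ← sq] at h
  linarith

theorem isBounded_setOf_forall_sq_apply_le [Fintype m] [Fintype n] (t : Matrix m n ℝ) :
    Bornology.IsBounded {f : Matrix m n ℝ | ∀ i j, f i j ^ 2 ≤ t i j} := by
  rw [isBounded_iff_forall_norm_le]
  refine ⟨∑ i, ∑ j, √(t i j), fun f hf => (norm_le_iff (by positivity)).mpr fun i j => ?_⟩
  calc ‖f i j‖ = |f i j| := Real.norm_eq_abs _
    _ ≤ √(t i j) := Real.abs_le_sqrt (hf i j)
    _ ≤ ∑ j', √(t i j') :=
      Finset.single_le_sum (fun _ _ => Real.sqrt_nonneg _) (Finset.mem_univ j)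
    _ ≤ ∑ i', ∑ j', √(t i' j') :=
      Finset.single_le_sum (f := fun i' => ∑ j', √(t i' j')) (fun _ _ => by positivity)
        (Finset.mem_univ i)

theorem convex_setOf_posDef_fromBlocks_fromRows (P : Matrix (m ⊕ n) (m ⊕ n) ℝ)
    (C : Matrix m ι ℝ) (E : Matrix ι ι ℝ) :
    Convex ℝ {f : Matrix n ι ℝ | (fromBlocks P (fromRows C f) (fromRows C f)ᵀ E).PosDef} := by
  intro f hf g hg a b ha hb hab
  have h_affine :
      fromBlocks P (fromRows C (a • f + b • g)) (fromRows C (a • f + b • g))ᵀ E =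
        a • fromBlocks P (fromRows C f) (fromRows C f)ᵀ E +
          b • fromBlocks P (fromRows C g) (fromRows C g)ᵀ E := by
    obtain rfl : b = 1 - a := by linarith
    ext ((i | i) | i) ((j | j) | j) <;> simp <;> ring
  simpa only [Set.mem_ofPred_eq, h_affine] using convex_setOf_posDef hf hg ha hb hab

theorem posDef_fromBlocks_iff_of_unique [Fintype n] [DecidableEq n] [Unique ι]
    {P : Matrix n n ℝ} (hP : P.PosDef) (X : Matrix n ι ℝ) (e : ℝ) :
    (fromBlocks P X Xᵀ (of fun _ _ => e)).PosDef ↔ (Xᵀ * P⁻¹ * X) default default < e := by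
  rw [← conjTranspose_eq_transpose_of_trivial, posDef_fromBlocks₁₁_iff X _ hP,
    posDef_iff_of_unique, sub_apply, of_apply, sub_pos]

theorem transpose_fromRows_mul_inv_fromBlocks_mul_fromRows [CommRing R] [Fintype m] [Fintype n]
    [DecidableEq m] [DecidableEq n] {A : Matrix m m R} (B : Matrix m n R) (D : Matrix n n R)
    (C : Matrix m ι R) (hA : IsUnit A.det) (hP : IsUnit (fromBlocks A B Bᵀ D).det) :
    (fromRows C (Bᵀ * A⁻¹ * C))ᵀ * (fromBlocks A B Bᵀ D)⁻¹ * fromRows C (Bᵀ * A⁻¹ * C) =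
      Cᵀ * A⁻¹ * C := by
  have hX : fromRows C (Bᵀ * A⁻¹ * C) =
      fromBlocks A B Bᵀ D * fromRows (A⁻¹ * C) (0 : Matrix n ι R) := by
    rw [fromBlocks_mul_fromRows, Matrix.mul_zero, Matrix.mul_zero, add_zero, add_zero,
      mul_nonsing_inv_cancel_left _ _ hA, Matrix.mul_assoc]
  calc _ = (fromRows C (Bᵀ * A⁻¹ * C))ᵀ * fromRows (A⁻¹ * C) (0 : Matrix n ι R) := by
        conv_lhs => rw [Matrix.mul_assoc]; arg 2; arg 2; rw [hX]
        rw [nonsing_inv_mul_cancel_left _ _ hP]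
    _ = Cᵀ * A⁻¹ * C := by
        rw [transpose_fromRows, fromCols_mul_fromRows, Matrix.mul_zero, add_zero,
          Matrix.mul_assoc]

end Matrix

theorem feasible_cross_block_set_properties_general
    (A : Matrix (Fin 3) (Fin 3) ℝ) (hA : A.PosDef)
    (B : Matrix (Fin 3) (Fin 2) ℝ) (C : Matrix (Fin 3) (Fin 1) ℝ)
    (D : Matrix (Fin 2) (Fin 2) ℝ) (e : ℝ)
    (hM : (D - Bᵀ * A⁻¹ * B).PosDef)
    (hv : 0 < e - (Cᵀ * A⁻¹ * C) 0 0) :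
    (let S : Set (Matrix (Fin 2) (Fin 1) ℝ) :=
      {f | (Matrix.fromBlocks (Matrix.fromBlocks A B Bᵀ D)
              (Matrix.fromRows C f) (Matrix.fromRows C f)ᵀ
              (Matrix.of fun _ _ : Fin 1 => e)).PosDef}
    S.Nonempty ∧ IsOpen S ∧ Convex ℝ S ∧ Bornology.IsBounded S
      ∧ Bᵀ * A⁻¹ * C ∈ S) := by
  intro S
  have hP : (fromBlocks A B Bᵀ D).PosDef := by
    rw [← conjTranspose_eq_transpose_of_trivial B] at hM ⊢
    exact (posDef_fromBlocks₁₁_iff B D hA).mpr hM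
  set P := fromBlocks A B Bᵀ D
  have hS : S = {f : Matrix (Fin 2) (Fin 1) ℝ | ((fromRows C f)ᵀ * P⁻¹ * fromRows C f) 0 0 < e} :=
    Set.ext fun f => posDef_fromBlocks_iff_of_unique hP (fromRows C f) e
  have hf₀ : Bᵀ * A⁻¹ * C ∈ S := by
    rw [hS, Set.mem_ofPred_eq, transpose_fromRows_mul_inv_fromBlocks_mul_fromRows B D C
      hA.det_pos.ne'.isUnit hP.det_pos.ne'.isUnit]
    linarith
  refine ⟨⟨_, hf₀⟩, ?_, convex_setOf_posDef_fromBlocks_fromRows P C _,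
    (isBounded_setOf_forall_sq_apply_le (of fun i _ => D i i * e)).subset fun f hf i j => ?_, hf₀⟩
  · rw [hS]
    exact isOpen_lt (by fun_prop) continuous_const
  · simpa [P] using hf.posSemidef.sq_apply_le (Sum.inl (Sum.inr i)) (Sum.inr j)

/-- The set of feasible cross-block covariances `f` (those making the block
matrix `Ψ = [[A,B,C],[Bᵀ,D,f],[Cᵀ,fᵀ,e]]` positive definite, with
`A ≻ 0`, `M = D − BᵀA⁻¹B ≻ 0`, `v = e − CᵀA⁻¹C > 0`) is nonempty, open,
convex, and bounded; in particular `f₀ = BᵀA⁻¹C` is feasible. -/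
theorem feasible_cross_block_set_properties
    (A : Matrix (Fin 3) (Fin 3) ℝ) (hA : A.PosDef)
    (B : Matrix (Fin 3) (Fin 2) ℝ) (C : Matrix (Fin 3) (Fin 1) ℝ)
    (D : Matrix (Fin 2) (Fin 2) ℝ) (hD : D.IsSymm) (e : ℝ)
    (hM : (D - Bᵀ * A⁻¹ * B).PosDef)
    (hv : 0 < e - (Cᵀ * A⁻¹ * C) 0 0) :
    (let S : Set (Matrix (Fin 2) (Fin 1) ℝ) :=
      {f | (Matrix.fromBlocks (Matrix.fromBlocks A B Bᵀ D)
              (Matrix.fromRows C f) (Matrix.fromRows C f)ᵀ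
              (Matrix.of fun _ _ : Fin 1 => e)).PosDef}
    S.Nonempty ∧ IsOpen S ∧ Convex ℝ S ∧ Bornology.IsBounded S
      ∧ Bᵀ * A⁻¹ * C ∈ S) :=
  feasible_cross_block_set_properties_general A hA B C D e hM hv
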